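/- Let 𝒴 ⊂ ℝ be a finite set, let 𝒜, 𝒢₁, ℬ₁, 𝒢₂ be finite types, let p be a strictly positive probability mass function on 𝒴 × 𝒜 × 𝒢₁ × ℬ₁ × 𝒢₂, and fix a ∈ 𝒜. If G₁ ⊥ (A, G₂) | B₁ under p, then Var_p( ψ_a^{B₁,G₂}(Y,A,B₁,G₂) ) = Var_p( ψ_a^{(G₁,B₁),G₂}(Y,A,G₁,B₁,G₂) ) + Var_p( ψ_a^{B₁,G₂}(Y,A,B₁,G₂) − ψ_a^{(G₁,B₁),G₂}(Y,A,G₁,B₁,G₂) ); in particular, Var_p( ψ_a^{B₁,G₂} ) ≥ Var_p( ψ_a^{(G₁,B₁),G₂} ). -/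

import Mathlib

/-!
Under `G₁ ⊥ (A, G₂) | B₁` we have `p(a, g₁, b₁, g₂) = p(g₁, b₁) p(a, b₁, g₂) / p(b₁)`. Hence the
inverse-probability weights of the two adjustment sets coincide, `m_{(G₁,B₁),G₂}` averages back to
`m_{B₁,G₂}` under `p(g₁ | b₁)`, the two targets agree, and `Δ = ψ^{B₁,G₂} - ψ^{(G₁,B₁),G₂}` is a
function of `(A, G₁, B₁, G₂)` alone whose `p`-weighted sums vanish on every fibre of `(G₁, B₁)` and
of `G₂`. On the other hand `ψ^{(G₁,B₁),G₂}` is a residual with conditional mean zero given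
`(A, G₁, B₁, G₂)` plus a function of the form `u(G₁, B₁) + v(G₂)`. So `Δ` has mean zero and is
orthogonal to `ψ^{(G₁,B₁),G₂}`, which gives the Pythagorean decomposition of the variance, and
`Var Δ = E[Δ²] ≥ 0`.
-/

open Finset

noncomputable section

variable {Y : Finset ℝ} {A G₁ B₁ G₂ : Type}
variable [Fintype A] [Fintype G₁] [Fintype B₁] [Fintype G₂] [DecidableEq A]

/-- Marginal `p(g₁)`. -/
def pG1 (p : Y × A × G₁ × B₁ × G₂ → ℝ) (g₁ : G₁) : ℝ :=
  ∑ y : Y, ∑ a : A, ∑ b₁ : B₁, ∑ g₂ : G₂, p (y, a, g₁, b₁, g₂)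

/-- Marginal `p(b₁)`. -/
def pB1 (p : Y × A × G₁ × B₁ × G₂ → ℝ) (b₁ : B₁) : ℝ :=
  ∑ y : Y, ∑ a : A, ∑ g₁ : G₁, ∑ g₂ : G₂, p (y, a, g₁, b₁, g₂)

/-- Marginal `p(g₂)`. -/
def pG2 (p : Y × A × G₁ × B₁ × G₂ → ℝ) (g₂ : G₂) : ℝ :=
  ∑ y : Y, ∑ a : A, ∑ g₁ : G₁, ∑ b₁ : B₁, p (y, a, g₁, b₁, g₂)

/-- Marginal `p(g₁, b₁)`. -/
def pG1B1 (p : Y × A × G₁ × B₁ × G₂ → ℝ) (g₁ : G₁) (b₁ : B₁) : ℝ :=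
  ∑ y : Y, ∑ a : A, ∑ g₂ : G₂, p (y, a, g₁, b₁, g₂)

/-- Marginal `p(a, b₁, g₂)`. -/
def pAB1G2 (p : Y × A × G₁ × B₁ × G₂ → ℝ) (a : A) (b₁ : B₁) (g₂ : G₂) : ℝ :=
  ∑ y : Y, ∑ g₁ : G₁, p (y, a, g₁, b₁, g₂)

/-- Marginal `p(a, g₁, b₁, g₂)`. -/
def pAG1B1G2 (p : Y × A × G₁ × B₁ × G₂ → ℝ) (a : A) (g₁ : G₁) (b₁ : B₁) (g₂ : G₂) : ℝ :=
  ∑ y : Y, p (y, a, g₁, b₁, g₂)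

/-- Marginal `p(a, g₁, g₂)`. -/
def pAG1G2 (p : Y × A × G₁ × B₁ × G₂ → ℝ) (a : A) (g₁ : G₁) (g₂ : G₂) : ℝ :=
  ∑ y : Y, ∑ b₁ : B₁, p (y, a, g₁, b₁, g₂)

/-- Outcome regression `m_B(b₁,g₂) = ∑_y y·p(y | a, b₁, g₂)` for the
adjustment set `(B₁, G₂)`. -/
def mB (p : Y × A × G₁ × B₁ × G₂ → ℝ) (a : A) (b₁ : B₁) (g₂ : G₂) : ℝ :=
  ∑ y : Y, (y : ℝ) * ((∑ g₁ : G₁, p (y, a, g₁, b₁, g₂)) / pAB1G2 p a b₁ g₂)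

/-- Outcome regression `m_{GB}(g₁,b₁,g₂) = ∑_y y·p(y | a, g₁, b₁, g₂)` for
the adjustment set `((G₁, B₁), G₂)`. -/
def mGB (p : Y × A × G₁ × B₁ × G₂ → ℝ) (a : A) (g₁ : G₁) (b₁ : B₁) (g₂ : G₂) : ℝ :=
  ∑ y : Y, (y : ℝ) * (p (y, a, g₁, b₁, g₂) / pAG1B1G2 p a g₁ b₁ g₂)

/-- Outcome regression `m_{GG}(g₁,g₂) = ∑_y y·p(y | a, g₁, g₂)` for the
adjustment set `(G₁, G₂)`. -/
def mGG (p : Y × A × G₁ × B₁ × G₂ → ℝ) (a : A) (g₁ : G₁) (g₂ : G₂) : ℝ :=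
  ∑ y : Y, (y : ℝ) * ((∑ b₁ : B₁, p (y, a, g₁, b₁, g₂)) / pAG1G2 p a g₁ g₂)

/-- Target parameter for the adjustment set `(B₁, G₂)`. -/
def TB (p : Y × A × G₁ × B₁ × G₂ → ℝ) (a : A) : ℝ :=
  ∑ b₁ : B₁, pB1 p b₁ * ∑ g₂ : G₂, pG2 p g₂ * mB p a b₁ g₂

/-- Target parameter for the adjustment set `((G₁, B₁), G₂)`. -/
def TGB (p : Y × A × G₁ × B₁ × G₂ → ℝ) (a : A) : ℝ :=
  ∑ g₁ : G₁, ∑ b₁ : B₁, pG1B1 p g₁ b₁ * ∑ g₂ : G₂, pG2 p g₂ * mGB p a g₁ b₁ g₂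

/-- Target parameter for the adjustment set `(G₁, G₂)`. -/
def TGG (p : Y × A × G₁ × B₁ × G₂ → ℝ) (a : A) : ℝ :=
  ∑ g₁ : G₁, pG1 p g₁ * ∑ g₂ : G₂, pG2 p g₂ * mGG p a g₁ g₂

/-- Influence function `ψ_a^{B₁,G₂}` for the adjustment set `(B₁, G₂)`. -/
def psiB (p : Y × A × G₁ × B₁ × G₂ → ℝ) (a : A)
    (y : Y) (a' : A) (b₁ : B₁) (g₂ : G₂) : ℝ :=
  (if a' = a then (1 : ℝ) else 0) * (pB1 p b₁ * pG2 p g₂ / pAB1G2 p a b₁ g₂) *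
      ((y : ℝ) - mB p a b₁ g₂)
    + (∑ g₂' : G₂, pG2 p g₂' * mB p a b₁ g₂')
    + (∑ b₁' : B₁, pB1 p b₁' * mB p a b₁' g₂)
    - 2 * TB p a

/-- Influence function `ψ_a^{(G₁,B₁),G₂}` for the adjustment set `((G₁, B₁), G₂)`. -/
def psiGB (p : Y × A × G₁ × B₁ × G₂ → ℝ) (a : A)
    (y : Y) (a' : A) (g₁ : G₁) (b₁ : B₁) (g₂ : G₂) : ℝ :=
  (if a' = a then (1 : ℝ) else 0) *
      (pG1B1 p g₁ b₁ * pG2 p g₂ / pAG1B1G2 p a g₁ b₁ g₂) *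
      ((y : ℝ) - mGB p a g₁ b₁ g₂)
    + (∑ g₂' : G₂, pG2 p g₂' * mGB p a g₁ b₁ g₂')
    + (∑ g₁' : G₁, ∑ b₁' : B₁, pG1B1 p g₁' b₁' * mGB p a g₁' b₁' g₂)
    - 2 * TGB p a

/-- Influence function `ψ_a^{G₁,G₂}` for the adjustment set `(G₁, G₂)`. -/
def psiGG (p : Y × A × G₁ × B₁ × G₂ → ℝ) (a : A)
    (y : Y) (a' : A) (g₁ : G₁) (g₂ : G₂) : ℝ :=
  (if a' = a then (1 : ℝ) else 0) * (pG1 p g₁ * pG2 p g₂ / pAG1G2 p a g₁ g₂) *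
      ((y : ℝ) - mGG p a g₁ g₂)
    + (∑ g₂' : G₂, pG2 p g₂' * mGG p a g₁ g₂')
    + (∑ g₁' : G₁, pG1 p g₁' * mGG p a g₁' g₂)
    - 2 * TGG p a

/-- Conditional independence `G₁ ⊥ (A, G₂) | B₁` under `p`. -/
def CI_G1_AG2_B1 (p : Y × A × G₁ × B₁ × G₂ → ℝ) : Prop :=
  ∀ (g₁ : G₁) (a : A) (g₂ : G₂) (b₁ : B₁),
    (∑ y : Y, p (y, a, g₁, b₁, g₂)) / pB1 p b₁ =
      (pG1B1 p g₁ b₁ / pB1 p b₁) * (pAB1G2 p a b₁ g₂ / pB1 p b₁)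

/-- Conditional independence `Y ⊥ B₁ | (A, G₁, G₂)` under `p`. -/
def CI_Y_B1_AG1G2 (p : Y × A × G₁ × B₁ × G₂ → ℝ) : Prop :=
  ∀ (y : Y) (a : A) (g₁ : G₁) (b₁ : B₁) (g₂ : G₂),
    p (y, a, g₁, b₁, g₂) / pAG1G2 p a g₁ g₂ =
      ((∑ b₁' : B₁, p (y, a, g₁, b₁', g₂)) / pAG1G2 p a g₁ g₂) *
        (pAG1B1G2 p a g₁ b₁ g₂ / pAG1G2 p a g₁ g₂)

/-- Variance of a real function of the observation under `p`. -/
def VarP (p : Y × A × G₁ × B₁ × G₂ → ℝ) (f : Y × A × G₁ × B₁ × G₂ → ℝ) : ℝ :=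
  (∑ o : Y × A × G₁ × B₁ × G₂, p o * f o ^ 2) -
    (∑ o : Y × A × G₁ × B₁ × G₂, p o * f o) ^ 2

set_option linter.unusedSectionVars false

theorem VarP_eq_VarP_add_VarP_sub (p f g : Y × A × G₁ × B₁ × G₂ → ℝ)
    (hmean : ∑ o, p o * (f o - g o) = 0) (horth : ∑ o, p o * (g o * (f o - g o)) = 0) :
    VarP p f = VarP p g + VarP p (fun o => f o - g o) := by
  have hsq : ∑ o, p o * f o ^ 2 = ∑ o, p o * g o ^ 2 +
      2 * ∑ o, p o * (g o * (f o - g o)) + ∑ o, p o * (f o - g o) ^ 2 := by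
    rw [mul_sum, ← sum_add_distrib, ← sum_add_distrib]
    exact sum_congr rfl fun o _ => by ring
  have hlin : ∑ o, p o * f o = ∑ o, p o * g o + ∑ o, p o * (f o - g o) := by
    rw [← sum_add_distrib]
    exact sum_congr rfl fun o _ => by ring
  simp only [VarP]
  rw [hsq, hlin, hmean, horth]
  ring

theorem VarP_nonneg_of_sum_mul_eq_zero (p f : Y × A × G₁ × B₁ × G₂ → ℝ) (hp : ∀ o, 0 ≤ p o)
    (hmean : ∑ o, p o * f o = 0) : 0 ≤ VarP p f := by
  rw [VarP, hmean, sub_nonneg, sq, mul_zero]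
  exact sum_nonneg fun o _ => mul_nonneg (hp o) (sq_nonneg _)

theorem sum_add_mul_eq_zero_of_marginals {α β γ δ : Type*} [Fintype α] [Fintype β] [Fintype γ]
    [Fintype δ] (k : α → β → γ → δ → ℝ) (u : β → γ → ℝ) (v : δ → ℝ)
    (h₁ : ∀ b c, ∑ a, ∑ d, k a b c d = 0) (h₂ : ∀ d, ∑ a, ∑ b, ∑ c, k a b c d = 0) :
    ∑ a, ∑ b, ∑ c, ∑ d, (u b c + v d) * k a b c d = 0 := by
  have hu : ∑ a, ∑ b, ∑ c, ∑ d, u b c * k a b c d = 0 := by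
    rw [sum_comm]
    refine sum_eq_zero fun b _ => ?_
    rw [sum_comm]
    refine sum_eq_zero fun c _ => ?_
    simp only [← mul_sum, h₁, mul_zero]
  have hv_rot : ∀ a, ∑ b, ∑ c, ∑ d, v d * k a b c d = ∑ d, v d * ∑ b, ∑ c, k a b c d := by
    intro a
    simp only [mul_sum]
    conv_rhs => rw [sum_comm]
    exact sum_congr rfl fun b _ => sum_comm
  have hv : ∑ a, ∑ b, ∑ c, ∑ d, v d * k a b c d = 0 := by
    simp only [hv_rot]
    rw [sum_comm]
    simp only [← mul_sum, h₂, mul_zero, sum_const_zero]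
  simp only [add_mul, sum_add_distrib, hu, hv, add_zero]

section Marginals

variable (p : Y × A × G₁ × B₁ × G₂ → ℝ)

theorem sum_pG1B1 (b₁ : B₁) : ∑ g₁, pG1B1 p g₁ b₁ = pB1 p b₁ := by
  simp only [pG1B1, pB1]
  rw [sum_comm]
  exact sum_congr rfl fun y _ => sum_comm

theorem sum_sum_pAG1B1G2 (g₁ : G₁) (b₁ : B₁) :
    ∑ a', ∑ g₂, pAG1B1G2 p a' g₁ b₁ g₂ = pG1B1 p g₁ b₁ := by
  simp only [pAG1B1G2, pG1B1]
  conv_rhs => rw [sum_comm]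
  exact sum_congr rfl fun a' _ => sum_comm

variable {p} (hpos : ∀ o, 0 < p o)
include hpos

theorem pAG1B1G2_pos [Nonempty Y] (a : A) (g₁ : G₁) (b₁ : B₁) (g₂ : G₂) :
    0 < pAG1B1G2 p a g₁ b₁ g₂ :=
  sum_pos (fun _ _ => hpos _) univ_nonempty

theorem pAB1G2_pos [Nonempty Y] [Nonempty G₁] (a : A) (b₁ : B₁) (g₂ : G₂) :
    0 < pAB1G2 p a b₁ g₂ :=
  sum_pos (fun _ _ => sum_pos (fun _ _ => hpos _) univ_nonempty) univ_nonempty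

theorem pG1B1_pos [Nonempty Y] [Nonempty A] [Nonempty G₂] (g₁ : G₁) (b₁ : B₁) :
    0 < pG1B1 p g₁ b₁ :=
  sum_pos (fun _ _ => sum_pos (fun _ _ => sum_pos (fun _ _ => hpos _) univ_nonempty)
    univ_nonempty) univ_nonempty

theorem pB1_pos [Nonempty Y] [Nonempty A] [Nonempty G₁] [Nonempty G₂] (b₁ : B₁) :
    0 < pB1 p b₁ :=
  sum_pos (fun _ _ => sum_pos (fun _ _ => sum_pos (fun _ _ => sum_pos (fun _ _ => hpos _)
    univ_nonempty) univ_nonempty) univ_nonempty) univ_nonempty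

end Marginals

def mGap (p : Y × A × G₁ × B₁ × G₂ → ℝ) (a : A) (g₁ : G₁) (b₁ : B₁) (g₂ : G₂) : ℝ :=
  mGB p a g₁ b₁ g₂ - mB p a b₁ g₂

def psiDiff (p : Y × A × G₁ × B₁ × G₂ → ℝ) (a a' : A) (g₁ : G₁) (b₁ : B₁) (g₂ : G₂) : ℝ :=
  (if a' = a then pB1 p b₁ * pG2 p g₂ / pAB1G2 p a b₁ g₂ * mGap p a g₁ b₁ g₂ else 0) -
    ∑ g₂', pG2 p g₂' * mGap p a g₁ b₁ g₂'

section ConditionalIndependence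

variable {p : Y × A × G₁ × B₁ × G₂ → ℝ} [Nonempty Y] [Nonempty A] [Nonempty G₁] [Nonempty G₂]
  (hpos : ∀ o, 0 < p o) (hCI : CI_G1_AG2_B1 p)
include hpos hCI

theorem pAG1B1G2_eq_of_CI (a : A) (g₁ : G₁) (b₁ : B₁) (g₂ : G₂) :
    pAG1B1G2 p a g₁ b₁ g₂ = pG1B1 p g₁ b₁ * pAB1G2 p a b₁ g₂ / pB1 p b₁ := by
  have hb := (pB1_pos hpos b₁).ne'
  have h := hCI g₁ a g₂ b₁
  rw [div_mul_div_comm, div_eq_div_iff hb (mul_ne_zero hb hb)] at h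
  rw [pAG1B1G2, eq_div_iff hb]
  exact mul_right_cancel₀ hb (by linear_combination h)

theorem pG1B1_div_pAG1B1G2 (a : A) (g₁ : G₁) (b₁ : B₁) (g₂ : G₂) :
    pG1B1 p g₁ b₁ / pAG1B1G2 p a g₁ b₁ g₂ = pB1 p b₁ / pAB1G2 p a b₁ g₂ := by
  have := (pG1B1_pos hpos g₁ b₁).ne'
  have := (pAB1G2_pos hpos a b₁ g₂).ne'
  have := (pB1_pos hpos b₁).ne'
  rw [pAG1B1G2_eq_of_CI hpos hCI]
  field_simp

theorem pAG1B1G2_mul_pB1_mul_pG2_div_pAB1G2 (a : A) (g₁ : G₁) (b₁ : B₁) (g₂ : G₂) :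
    pAG1B1G2 p a g₁ b₁ g₂ * (pB1 p b₁ * pG2 p g₂ / pAB1G2 p a b₁ g₂) =
      pG1B1 p g₁ b₁ * pG2 p g₂ := by
  rw [mul_div_right_comm, ← pG1B1_div_pAG1B1G2 hpos hCI, ← mul_div_right_comm,
    mul_div_cancel₀ _ (pAG1B1G2_pos hpos a g₁ b₁ g₂).ne']

theorem sum_pG1B1_mul_mGB (a : A) (b₁ : B₁) (g₂ : G₂) :
    ∑ g₁, pG1B1 p g₁ b₁ * mGB p a g₁ b₁ g₂ = pB1 p b₁ * mB p a b₁ g₂ := by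
  have h : ∀ g₁, pG1B1 p g₁ b₁ * mGB p a g₁ b₁ g₂ =
      ∑ y : Y, (y : ℝ) * p (y, a, g₁, b₁, g₂) * (pB1 p b₁ / pAB1G2 p a b₁ g₂) := by
    intro g₁
    rw [mGB, mul_sum, ← pG1B1_div_pAG1B1G2 hpos hCI a g₁]
    exact sum_congr rfl fun y _ => by ring
  simp only [h]
  rw [sum_comm, mB, mul_sum]
  refine sum_congr rfl fun y _ => ?_
  rw [← sum_mul, ← mul_sum]
  ring

theorem TGB_eq_TB (a : A) : TGB p a = TB p a := by
  rw [TGB, TB, sum_comm]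
  refine sum_congr rfl fun b₁ _ => ?_
  simp only [mul_sum]
  rw [sum_comm]
  refine sum_congr rfl fun g₂ _ => ?_
  simp only [mul_left_comm _ (pG2 p g₂), ← mul_sum, sum_pG1B1_mul_mGB hpos hCI]

theorem sum_pG1B1_mul_mGap (a : A) (b₁ : B₁) (g₂ : G₂) :
    ∑ g₁, pG1B1 p g₁ b₁ * mGap p a g₁ b₁ g₂ = 0 := by
  simp only [mGap, mul_sub, sum_sub_distrib, sum_pG1B1_mul_mGB hpos hCI, ← sum_mul, sum_pG1B1,
    sub_self]

theorem sum_pG1B1_mul_sum_pG2_mul_mGap (a : A) (b₁ : B₁) :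
    ∑ g₁, pG1B1 p g₁ b₁ * ∑ g₂, pG2 p g₂ * mGap p a g₁ b₁ g₂ = 0 := by
  simp only [mul_sum]
  rw [sum_comm]
  refine sum_eq_zero fun g₂ _ => ?_
  simp only [mul_left_comm _ (pG2 p g₂), ← mul_sum, sum_pG1B1_mul_mGap hpos hCI, mul_zero]

theorem psiB_sub_psiGB (a : A) (y : Y) (a' : A) (g₁ : G₁) (b₁ : B₁) (g₂ : G₂) :
    psiB p a y a' b₁ g₂ - psiGB p a y a' g₁ b₁ g₂ = psiDiff p a a' g₁ b₁ g₂ := by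
  have hweight : pG1B1 p g₁ b₁ * pG2 p g₂ / pAG1B1G2 p a g₁ b₁ g₂ =
      pB1 p b₁ * pG2 p g₂ / pAB1G2 p a b₁ g₂ := by
    rw [mul_div_right_comm, pG1B1_div_pAG1B1G2 hpos hCI, mul_div_right_comm]
  have hcorr : ∑ g₁', ∑ b₁', pG1B1 p g₁' b₁' * mGB p a g₁' b₁' g₂ =
      ∑ b₁', pB1 p b₁' * mB p a b₁' g₂ := by
    rw [sum_comm]
    exact sum_congr rfl fun b₁' _ => sum_pG1B1_mul_mGB hpos hCI a b₁' g₂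
  rw [psiB, psiGB, psiDiff, hweight, hcorr, TGB_eq_TB hpos hCI]
  simp only [mGap, mul_sub, sum_sub_distrib]
  split_ifs <;> ring

theorem sum_sum_pAG1B1G2_mul_psiDiff (a : A) (g₁ : G₁) (b₁ : B₁) :
    ∑ a', ∑ g₂, pAG1B1G2 p a' g₁ b₁ g₂ * psiDiff p a a' g₁ b₁ g₂ = 0 := by
  simp only [psiDiff, mul_sub, mul_ite, mul_zero, sum_sub_distrib, sum_ite_irrel, sum_const_zero,
    sum_ite_eq', mem_univ, if_true, ← sum_mul, sum_sum_pAG1B1G2]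
  simp only [← mul_assoc, pAG1B1G2_mul_pB1_mul_pG2_div_pAB1G2 hpos hCI]
  simp only [mul_assoc, ← mul_sum, sub_self]

theorem sum_sum_sum_pAG1B1G2_mul_psiDiff (a : A) (g₂ : G₂) :
    ∑ a', ∑ g₁, ∑ b₁, pAG1B1G2 p a' g₁ b₁ g₂ * psiDiff p a a' g₁ b₁ g₂ = 0 := by
  simp only [psiDiff, mul_sub, mul_ite, mul_zero, sum_sub_distrib, sum_ite_irrel, sum_const_zero,
    sum_ite_eq', mem_univ, if_true]
  have hipw : ∑ g₁, ∑ b₁, pAG1B1G2 p a g₁ b₁ g₂ *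
      (pB1 p b₁ * pG2 p g₂ / pAB1G2 p a b₁ g₂ * mGap p a g₁ b₁ g₂) = 0 := by
    simp only [← mul_assoc, pAG1B1G2_mul_pB1_mul_pG2_div_pAB1G2 hpos hCI]
    rw [sum_comm]
    refine sum_eq_zero fun b₁ _ => ?_
    simp only [mul_right_comm _ (pG2 p g₂), ← sum_mul, sum_pG1B1_mul_mGap hpos hCI, zero_mul]
  have havg : ∑ a', ∑ g₁, ∑ b₁, pAG1B1G2 p a' g₁ b₁ g₂ *
      ∑ g₂', pG2 p g₂' * mGap p a g₁ b₁ g₂' = 0 := by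
    refine sum_eq_zero fun a' _ => ?_
    rw [sum_comm]
    refine sum_eq_zero fun b₁ _ => ?_
    rw [← mul_zero (pAB1G2 p a' b₁ g₂ / pB1 p b₁),
      ← sum_pG1B1_mul_sum_pG2_mul_mGap hpos hCI a b₁, mul_sum]
    exact sum_congr rfl fun g₁ _ => by rw [pAG1B1G2_eq_of_CI hpos hCI]; ring
  rw [hipw, havg, sub_zero]

end ConditionalIndependence

section Residual

variable {p : Y × A × G₁ × B₁ × G₂ → ℝ} [Nonempty Y] (hpos : ∀ o, 0 < p o)
include hpos

theorem sum_mul_sub_mGB (a : A) (g₁ : G₁) (b₁ : B₁) (g₂ : G₂) :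
    ∑ y, p (y, a, g₁, b₁, g₂) * ((y : ℝ) - mGB p a g₁ b₁ g₂) = 0 := by
  have hq := (pAG1B1G2_pos hpos a g₁ b₁ g₂).ne'
  have hm : pAG1B1G2 p a g₁ b₁ g₂ * mGB p a g₁ b₁ g₂ = ∑ y : Y, p (y, a, g₁, b₁, g₂) * y := by
    rw [mGB, mul_sum]
    exact sum_congr rfl fun y _ => by field_simp
  rw [pAG1B1G2, sum_mul] at hm
  simp only [mul_sub, sum_sub_distrib, hm, sub_self]

theorem sum_mul_psiGB (a a' : A) (g₁ : G₁) (b₁ : B₁) (g₂ : G₂) :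
    ∑ y, p (y, a', g₁, b₁, g₂) * psiGB p a y a' g₁ b₁ g₂ =
      ((∑ g₂', pG2 p g₂' * mGB p a g₁ b₁ g₂') +
        ((∑ g₁', ∑ b₁', pG1B1 p g₁' b₁' * mGB p a g₁' b₁' g₂) - 2 * TGB p a)) *
        pAG1B1G2 p a' g₁ b₁ g₂ := by
  have hres : (if a' = a then (1 : ℝ) else 0) *
      ∑ y, p (y, a', g₁, b₁, g₂) * ((y : ℝ) - mGB p a g₁ b₁ g₂) = 0 := by
    split_ifs with h
    · rw [h, one_mul, sum_mul_sub_mGB hpos]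
    · rw [zero_mul]
  calc ∑ y, p (y, a', g₁, b₁, g₂) * psiGB p a y a' g₁ b₁ g₂
      = pG1B1 p g₁ b₁ * pG2 p g₂ / pAG1B1G2 p a g₁ b₁ g₂ * ((if a' = a then (1 : ℝ) else 0) *
          ∑ y, p (y, a', g₁, b₁, g₂) * ((y : ℝ) - mGB p a g₁ b₁ g₂)) +
        ((∑ g₂', pG2 p g₂' * mGB p a g₁ b₁ g₂') +
          ((∑ g₁', ∑ b₁', pG1B1 p g₁' b₁' * mGB p a g₁' b₁' g₂) - 2 * TGB p a)) *
          ∑ y, p (y, a', g₁, b₁, g₂) := by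
        rw [mul_sum, mul_sum, mul_sum, ← sum_add_distrib]
        exact sum_congr rfl fun y _ => by rw [psiGB]; ring
    _ = _ := by rw [hres, mul_zero, zero_add, pAG1B1G2]

end Residual

section Orthogonality

variable {p : Y × A × G₁ × B₁ × G₂ → ℝ} [Nonempty Y] [Nonempty A] [Nonempty G₁] [Nonempty G₂]
  (hpos : ∀ o, 0 < p o) (hCI : CI_G1_AG2_B1 p)
include hpos hCI

theorem sum_mul_psiB_sub_psiGB (a : A) :
    ∑ o, p o * (psiB p a o.1 o.2.1 o.2.2.2.1 o.2.2.2.2 -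
      psiGB p a o.1 o.2.1 o.2.2.1 o.2.2.2.1 o.2.2.2.2) = 0 := by
  rw [Fintype.sum_prod_type_right]
  simp only [Fintype.sum_prod_type, psiB_sub_psiGB hpos hCI, ← sum_mul]
  have h := sum_add_mul_eq_zero_of_marginals _ (fun _ _ => 1) 0
    (sum_sum_pAG1B1G2_mul_psiDiff hpos hCI a) (sum_sum_sum_pAG1B1G2_mul_psiDiff hpos hCI a)
  simp only [Pi.zero_apply, add_zero, one_mul] at h
  exact h

theorem sum_mul_psiGB_mul_psiB_sub_psiGB (a : A) :
    ∑ o, p o * (psiGB p a o.1 o.2.1 o.2.2.1 o.2.2.2.1 o.2.2.2.2 *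
      (psiB p a o.1 o.2.1 o.2.2.2.1 o.2.2.2.2 -
        psiGB p a o.1 o.2.1 o.2.2.1 o.2.2.2.1 o.2.2.2.2)) = 0 := by
  rw [Fintype.sum_prod_type_right]
  simp only [Fintype.sum_prod_type, psiB_sub_psiGB hpos hCI, ← mul_assoc, ← sum_mul,
    sum_mul_psiGB hpos]
  simp only [mul_assoc]
  exact sum_add_mul_eq_zero_of_marginals _ _ _
    (sum_sum_pAG1B1G2_mul_psiDiff hpos hCI a) (sum_sum_sum_pAG1B1G2_mul_psiDiff hpos hCI a)

end Orthogonality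

theorem variance_decomposition_supplement_mediator_general
    (p : Y × A × G₁ × B₁ × G₂ → ℝ)
    (hpos : ∀ o, 0 < p o) (a : A)
    (hCI : CI_G1_AG2_B1 p) :
    (VarP p (fun o => psiB p a o.1 o.2.1 o.2.2.2.1 o.2.2.2.2) =
      VarP p (fun o => psiGB p a o.1 o.2.1 o.2.2.1 o.2.2.2.1 o.2.2.2.2) +
        VarP p (fun o => psiB p a o.1 o.2.1 o.2.2.2.1 o.2.2.2.2 -
          psiGB p a o.1 o.2.1 o.2.2.1 o.2.2.2.1 o.2.2.2.2)) ∧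
    VarP p (fun o => psiB p a o.1 o.2.1 o.2.2.2.1 o.2.2.2.2) ≥
      VarP p (fun o => psiGB p a o.1 o.2.1 o.2.2.1 o.2.2.2.1 o.2.2.2.2) := by
  rcases isEmpty_or_nonempty (Y × A × G₁ × B₁ × G₂) with _ | ⟨y, a', g₁, -, g₂⟩
  · simp [VarP]
  have : Nonempty Y := ⟨y⟩
  have : Nonempty A := ⟨a'⟩
  have : Nonempty G₁ := ⟨g₁⟩
  have : Nonempty G₂ := ⟨g₂⟩
  have hmean := sum_mul_psiB_sub_psiGB hpos hCI a
  have hdecomp := VarP_eq_VarP_add_VarP_sub p _ _ hmean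
    (sum_mul_psiGB_mul_psiB_sub_psiGB hpos hCI a)
  refine ⟨hdecomp, ?_⟩
  rw [hdecomp, ge_iff_le, le_add_iff_nonneg_right]
  exact VarP_nonneg_of_sum_mul_eq_zero p _ (fun o => (hpos o).le) hmean

/-- Lemma 4.3 (supplement of mediator variables), discrete form: under
`G₁ ⊥ (A, G₂) | B₁`, the variance of `ψ_a^{B₁,G₂}` decomposes as the
variance of `ψ_a^{(G₁,B₁),G₂}` plus the variance of the difference; in
particular the larger adjustment set has no larger asymptotic variance. -/
theorem variance_decomposition_supplement_mediator
    (p : Y × A × G₁ × B₁ × G₂ → ℝ)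
    (hpos : ∀ o, 0 < p o) (hsum : ∑ o, p o = 1) (a : A)
    (hCI : CI_G1_AG2_B1 p) :
    (VarP p (fun o => psiB p a o.1 o.2.1 o.2.2.2.1 o.2.2.2.2) =
      VarP p (fun o => psiGB p a o.1 o.2.1 o.2.2.1 o.2.2.2.1 o.2.2.2.2) +
        VarP p (fun o => psiB p a o.1 o.2.1 o.2.2.2.1 o.2.2.2.2 -
          psiGB p a o.1 o.2.1 o.2.2.1 o.2.2.2.1 o.2.2.2.2)) ∧
    VarP p (fun o => psiB p a o.1 o.2.1 o.2.2.2.1 o.2.2.2.2) ≥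
      VarP p (fun o => psiGB p a o.1 o.2.1 o.2.2.1 o.2.2.2.1 o.2.2.2.2) :=
  variance_decomposition_supplement_mediator_general p hpos a hCI

end
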